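/- Let a, b ≥ 1 be integers and let L = ([0, a+1] × [0,1]) ∪ ([0,1] × [0, b+1]) ⊆ ℝ² (the region of an L-shaped polyomino consisting of one HV-square with a horizontal appendage of length a and a vertical appendage of length b). Then there exists a similarity σ of ℝ² of ratio 1/√2 such that L folds to two levels onto σ(L). -/

import Mathlib

open MeasureTheory
open scoped Classical

noncomputable section

/-- The Euclidean plane ℝ². -/
abbrev Plane := EuclideanSpace ℝ (Fin 2)

/-- `P` folds to two levels onto `T` via the pieces `A i` and isometries `g i`:
the pieces are measurable, pairwise disjoint up to measure zero, their union is `P`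
up to measure zero, and for a.e. point `x` the number of indices `i` with
`x ∈ g i '' A i` is `2` if `x ∈ T` and `0` otherwise. -/
def IsFoldingData {k : ℕ} (A : Fin k → Set Plane) (g : Fin k → (Plane ≃ᵢ Plane))
    (P T : Set Plane) : Prop :=
  (∀ i, MeasurableSet (A i)) ∧
  (∀ i j, i ≠ j → volume (A i ∩ A j) = 0) ∧
  volume (symmDiff (⋃ i, A i) P) = 0 ∧
  ∀ᵐ x : Plane, ((Finset.univ.filter (fun i => x ∈ g i '' A i)).card : ℕ)
      = if x ∈ T then 2 else 0

/-- `P` folds to two levels onto `T`. -/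
def FoldsToTwoLevels (P T : Set Plane) : Prop :=
  ∃ (k : ℕ) (A : Fin k → Set Plane) (g : Fin k → (Plane ≃ᵢ Plane)),
    IsFoldingData A g P T

/-- `P` folds to two levels onto `T` without cuts: in addition there is a continuous
map `f` on `P` agreeing with `g i` on each piece `A i`. -/
def FoldsToTwoLevelsWithoutCuts (P T : Set Plane) : Prop :=
  ∃ (k : ℕ) (A : Fin k → Set Plane) (g : Fin k → (Plane ≃ᵢ Plane)),
    IsFoldingData A g P T ∧
    ∃ f : Plane → Plane, ContinuousOn f P ∧ ∀ i, ∀ x ∈ A i, f x = g i x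

/-- A similarity of ratio `r`. -/
def IsSimilarity (σ : Plane → Plane) (r : ℝ) : Prop :=
  ∀ x y, dist (σ x) (σ y) = r * dist x y

/-- The axis-aligned closed rectangle `[a,b] × [c,d]` in the plane. -/
def rect (a b c d : ℝ) : Set Plane :=
  {p | a ≤ p 0 ∧ p 0 ≤ b ∧ c ≤ p 1 ∧ p 1 ≤ d}

/-!
The similarity is `σ (x, y) = ((x - y) / 2, (x + y) / 2)`. A unit lattice cell is cut by its
diagonals into four right isosceles triangles; translating the bottom and the top one tiles `σ`
of the cell, and the left and right ones are their mirror images in the diagonal `x = y`, so the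
cell folds to two levels onto its image. Distinct cells, and their images under `σ`, meet only in
null sets, so these foldings glue to a folding of every finite union of cells, such as the L-shape.
-/

open Set

section Measure

variable {d : ℕ}

theorem IsometryEquiv.measurePreserving_volume
    (e : EuclideanSpace ℝ (Fin d) ≃ᵢ EuclideanSpace ℝ (Fin d)) : MeasurePreserving e := by
  simpa only [EuclideanSpace.euclideanHausdorffMeasure_eq_volume] using
    e.measurePreserving_euclideanHausdorffMeasure d

theorem Isometry.volume_image {f : EuclideanSpace ℝ (Fin d) → EuclideanSpace ℝ (Fin d)}
    (hf : Isometry f) (s : Set (EuclideanSpace ℝ (Fin d))) : volume (f '' s) = volume s := by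
  simpa only [EuclideanSpace.euclideanHausdorffMeasure_eq_volume] using
    hf.euclideanHausdorffMeasure_image (d := d) s

theorem LipschitzWith.volume_image_eq_zero {K : NNReal}
    {f : EuclideanSpace ℝ (Fin d) → EuclideanSpace ℝ (Fin d)} (hf : LipschitzWith K f)
    {s : Set (EuclideanSpace ℝ (Fin d))} (hs : volume s = 0) : volume (f '' s) = 0 := by
  rw [← EuclideanSpace.euclideanHausdorffMeasure_eq_volume, Measure.euclideanHausdorffMeasure_def,
    Measure.smul_apply, smul_eq_zero] at hs ⊢
  refine hs.imp_right fun hs => le_antisymm ?_ zero_le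
  simpa [hs] using hf.hausdorffMeasure_image_le (d := d) (Nat.cast_nonneg d) s

theorem LinearMap.volume_preimage_singleton_eq_zero {E : Type*} [NormedAddCommGroup E]
    [NormedSpace ℝ E] [FiniteDimensional ℝ E] [MeasurableSpace E] [BorelSpace E]
    (μ : Measure E) [μ.IsAddHaarMeasure] {f : E →ₗ[ℝ] ℝ} (hf : f ≠ 0) (t : ℝ) :
    μ (f ⁻¹' {t}) = 0 := by
  rcases eq_empty_or_nonempty (f ⁻¹' {t}) with h | ⟨x₀, hx₀⟩
  · simp [h]
  have : f ⁻¹' {t} = AffineSubspace.mk' x₀ (LinearMap.ker f) := by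
    ext x
    simp_all [AffineSubspace.mem_mk', sub_eq_zero]
  rw [this]
  refine Measure.addHaar_affineSubspace μ _ fun htop => hf ?_
  have := congrArg AffineSubspace.direction htop
  rwa [AffineSubspace.direction_mk', AffineSubspace.direction_top, LinearMap.ker_eq_top] at this

end Measure

theorem volume_setOf_line_eq_zero {α β : ℝ} (h : α ≠ 0 ∨ β ≠ 0) (t : ℝ) :
    volume {x : Plane | α * x 0 + β * x 1 = t} = 0 := by
  let f : Plane →ₗ[ℝ] ℝ :=
    α • (EuclideanSpace.proj 0 : Plane →L[ℝ] ℝ).toLinearMap +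
      β • (EuclideanSpace.proj 1 : Plane →L[ℝ] ℝ).toLinearMap
  have hf : f ≠ 0 := by
    intro hf
    have h0 := LinearMap.congr_fun hf (EuclideanSpace.single 0 1)
    have h1 := LinearMap.congr_fun hf (EuclideanSpace.single 1 1)
    simp [f] at h0 h1
    tauto
  exact f.volume_preimage_singleton_eq_zero volume hf t

theorem Set.iUnion_fin_append {α : Type*} {m n : ℕ} (A : Fin m → Set α)
    (B : Fin n → Set α) : ⋃ i, Fin.append A B i = (⋃ i, A i) ∪ ⋃ i, B i := by
  refine Subset.antisymm (iUnion_subset fun i => ?_) (union_subset ?_ ?_)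
  · induction i using Fin.addCases with
    | left i => simpa using subset_union_of_subset_left (subset_iUnion A i) _
    | right j => simpa using subset_union_of_subset_right (subset_iUnion B j) _
  · exact iUnion_subset fun i => by simpa using subset_iUnion (Fin.append A B) (Fin.castAdd n i)
  · exact iUnion_subset fun j => by simpa using subset_iUnion (Fin.append A B) (Fin.natAdd m j)

/-- `P` folds onto the level function `c`: as in `IsFoldingData`, but almost every `x` is covered
exactly `c x` times. -/
def FoldsToLevels (P : Set Plane) (c : Plane → ℕ) : Prop :=
  ∃ (k : ℕ) (A : Fin k → Set Plane) (g : Fin k → (Plane ≃ᵢ Plane)),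
    (∀ i, MeasurableSet (A i)) ∧ (∀ i j, i ≠ j → volume (A i ∩ A j) = 0) ∧
    volume (symmDiff (⋃ i, A i) P) = 0 ∧
    ∀ᵐ x : Plane, (Finset.univ.filter (fun i => x ∈ g i '' A i)).card = c x

theorem foldsToTwoLevels_iff {P T : Set Plane} :
    FoldsToTwoLevels P T ↔ FoldsToLevels P (T.indicator fun _ => 2) := by
  simp only [FoldsToTwoLevels, IsFoldingData, FoldsToLevels, indicator_apply]

namespace FoldsToLevels

variable {P P₁ P₂ T₁ T₂ : Set Plane} {c c₁ c₂ : Plane → ℕ}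

theorem empty : FoldsToLevels ∅ 0 :=
  ⟨0, finZeroElim, finZeroElim, finZeroElim, finZeroElim, by simp, by simp⟩

theorem of_isometry (g : Plane ≃ᵢ Plane) {A : Set Plane} (hA : MeasurableSet A) :
    FoldsToLevels A ((g '' A).indicator fun _ => 1) := by
  refine ⟨1, fun _ => A, fun _ => g, fun _ => hA,
    fun i j hij => (hij (Subsingleton.elim i j)).elim,
    by simp only [iUnion_const, symmDiff_self, bot_eq_empty, measure_empty],
    .of_forall fun x => ?_⟩
  by_cases hx : x ∈ g '' A <;> simp [hx]

theorem congr_ae (h : FoldsToLevels P c) {c' : Plane → ℕ} (hc : c =ᵐ[volume] c') :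
    FoldsToLevels P c' := by
  obtain ⟨k, A, g, hA, hdisj, hcover, hcount⟩ := h
  refine ⟨k, A, g, hA, hdisj, hcover, ?_⟩
  filter_upwards [hcount, hc] with x hx hcx
  rw [hx, hcx]

theorem union (h₁ : FoldsToLevels P₁ c₁) (h₂ : FoldsToLevels P₂ c₂)
    (hP : volume (P₁ ∩ P₂) = 0) : FoldsToLevels (P₁ ∪ P₂) (c₁ + c₂) := by
  obtain ⟨k₁, A₁, g₁, hA₁, hdisj₁, hcover₁, hcount₁⟩ := h₁
  obtain ⟨k₂, A₂, g₂, hA₂, hdisj₂, hcover₂, hcount₂⟩ := h₂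
  -- `A₁ i ∩ A₂ j` lies in `P₁ ∩ P₂` up to the null sets `symmDiff (⋃ i, Aₖ i) Pₖ`
  have hcross : ∀ i j, volume (A₁ i ∩ A₂ j) = 0 := by
    intro i j
    refine measure_mono_null (fun x hx => ?_)
      (measure_union_null (measure_union_null hcover₁ hcover₂) hP)
    by_cases hx₁ : x ∈ P₁
    · by_cases hx₂ : x ∈ P₂
      · exact Or.inr ⟨hx₁, hx₂⟩
      · exact Or.inl (Or.inr (Or.inl ⟨mem_iUnion_of_mem j hx.2, hx₂⟩))
    · exact Or.inl (Or.inl (Or.inl ⟨mem_iUnion_of_mem i hx.1, hx₁⟩))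
  refine ⟨k₁ + k₂, Fin.append A₁ A₂, Fin.append g₁ g₂, ?_, ?_, ?_, ?_⟩
  · exact Fin.addCases (by simpa using hA₁) (by simpa using hA₂)
  · intro i j hij
    induction i using Fin.addCases <;> induction j using Fin.addCases <;>
      simp_all [inter_comm]
  · rw [Set.iUnion_fin_append]
    exact measure_mono_null union_symmDiff_union_subset (measure_union_null hcover₁ hcover₂)
  · filter_upwards [hcount₁, hcount₂] with x hx₁ hx₂
    simp only [Finset.card_filter, Fin.sum_univ_add, Fin.append_left, Fin.append_right]
      at hx₁ hx₂ ⊢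
    rw [hx₁, hx₂, Pi.add_apply]

theorem image_indicator {T : Set Plane} {n : ℕ}
    (h : FoldsToLevels P (T.indicator fun _ => n)) (e f : Plane ≃ᵢ Plane) :
    FoldsToLevels (e '' P) ((f '' T).indicator fun _ => n) := by
  obtain ⟨k, A, g, hA, hdisj, hcover, hcount⟩ := h
  have hmem : ∀ i x,
      x ∈ e.symm.trans ((g i).trans f) '' (e '' A i) ↔ f.symm x ∈ g i '' A i := by
    intro i x
    simp only [image_image, IsometryEquiv.trans_apply, IsometryEquiv.symm_apply_apply]
    rw [← image_image f (g i), ← f.preimage_symm, mem_preimage]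
  refine ⟨k, fun i => e '' A i, fun i => e.symm.trans ((g i).trans f),
    fun i => e.toHomeomorph.measurableEmbedding.measurableSet_image.2 (hA i),
    fun i j hij => ?_, ?_, ?_⟩
  · rw [← image_inter e.injective, e.isometry.volume_image]
    exact hdisj i j hij
  · rw [← image_iUnion, ← image_symmDiff e.injective, e.isometry.volume_image]
    exact hcover
  · filter_upwards [f.symm.measurePreserving_volume.quasiMeasurePreserving.ae hcount]
      with x hx
    simp only [hmem, hx, indicator_apply, ← f.preimage_symm, mem_preimage]

theorem union_indicator {n : ℕ} (h₁ : FoldsToLevels P₁ (T₁.indicator fun _ => n))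
    (h₂ : FoldsToLevels P₂ (T₂.indicator fun _ => n)) (hP : volume (P₁ ∩ P₂) = 0)
    (hT : volume (T₁ ∩ T₂) = 0) :
    FoldsToLevels (P₁ ∪ P₂) ((T₁ ∪ T₂).indicator fun _ => n) := by
  refine (h₁.union h₂ hP).congr_ae ?_
  filter_upwards [measure_eq_zero_iff_ae_notMem.1 hT] with x hx
  exact (indicator_union_of_notMem_inter hx _).symm

theorem biUnion_indicator {ι : Type*} {S : Finset ι} {P T : ι → Set Plane} {n : ℕ}
    (h : ∀ i ∈ S, FoldsToLevels (P i) ((T i).indicator fun _ => n))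
    (hP : (S : Set ι).Pairwise fun i j => volume (P i ∩ P j) = 0)
    (hT : (S : Set ι).Pairwise fun i j => volume (T i ∩ T j) = 0) :
    FoldsToLevels (⋃ i ∈ S, P i) ((⋃ i ∈ S, T i).indicator fun _ => n) := by
  classical
  induction S using Finset.induction_on with
  | empty => simpa [Pi.zero_def] using empty
  | insert i S hi ih =>
    rw [Finset.coe_insert, pairwise_insert_of_notMem (by simpa using hi)] at hP hT
    simp only [Finset.set_biUnion_insert]
    refine (h i (Finset.mem_insert_self i S)).union_indicator
      (ih (fun j hj => h j (Finset.mem_insert_of_mem hj)) hP.1 hT.1) ?_ ?_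
    · rw [inter_iUnion₂]
      exact (measure_biUnion_null_iff S.countable_toSet).2 fun j hj => (hP.2 j hj).1
    · rw [inter_iUnion₂]
      exact (measure_biUnion_null_iff S.countable_toSet).2 fun j hj => (hT.2 j hj).1

end FoldsToLevels

theorem IsSimilarity.lipschitzWith {σ : Plane → Plane} {r : ℝ} (h : IsSimilarity σ r) :
    LipschitzWith (Real.toNNReal r) σ :=
  LipschitzWith.of_dist_le_mul fun x y => by
    rw [h x y]
    gcongr
    exact Real.le_coe_toNNReal r

theorem IsSimilarity.injective {σ : Plane → Plane} {r : ℝ} (h : IsSimilarity σ r)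
    (hr : r ≠ 0) : Function.Injective σ := fun x y hxy => by
  simpa [hxy, hr] using h x y

/-- Rotation by `π/4` followed by scaling by `1/√2`. -/
def rotScale (y : Plane) : Plane := !₂[(y 0 - y 1) / 2, (y 0 + y 1) / 2]

@[simp] theorem rotScale_apply_zero (y : Plane) : rotScale y 0 = (y 0 - y 1) / 2 := rfl
@[simp] theorem rotScale_apply_one (y : Plane) : rotScale y 1 = (y 0 + y 1) / 2 := rfl

theorem dist_eq_sqrt_sq_add_sq (x y : Plane) :
    dist x y = √((x 0 - y 0) ^ 2 + (x 1 - y 1) ^ 2) := by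
  simp [EuclideanSpace.dist_eq, Fin.sum_univ_two, Real.dist_eq, sq_abs]

theorem isSimilarity_rotScale : IsSimilarity rotScale (1 / √2) := by
  intro x y
  rw [dist_eq_sqrt_sq_add_sq, dist_eq_sqrt_sq_add_sq, rotScale_apply_zero, rotScale_apply_zero,
    rotScale_apply_one, rotScale_apply_one, one_div, ← Real.sqrt_inv,
    ← Real.sqrt_mul (by positivity)]
  congr 1
  ring

theorem rotScale_add (x y : Plane) : rotScale (x + y) = rotScale x + rotScale y := by
  ext i; fin_cases i <;> simp <;> ring

theorem mem_image_rotScale {s : Set Plane} {x : Plane} :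
    x ∈ rotScale '' s ↔ !₂[x 0 + x 1, x 1 - x 0] ∈ s := by
  constructor
  · rintro ⟨y, hy, rfl⟩
    have : !₂[rotScale y 0 + rotScale y 1, rotScale y 1 - rotScale y 0] = y := by
      ext i; fin_cases i <;> simp <;> ring
    rwa [this]
  · intro hx
    refine ⟨_, hx, ?_⟩
    ext i; fin_cases i <;> simp <;> ring

def cell (c : ℤ × ℤ) : Set Plane := rect c.1 (c.1 + 1) c.2 (c.2 + 1)

def swapIso : Plane ≃ᵢ Plane :=
  (LinearIsometryEquiv.piLpCongrLeft 2 ℝ ℝ (Equiv.swap (0 : Fin 2) 1)).toIsometryEquiv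

theorem mem_image_swapIso {s : Set Plane} {x : Plane} :
    x ∈ swapIso '' s ↔ !₂[x 1, x 0] ∈ s := by
  have : swapIso.symm x = !₂[x 1, x 0] := by
    ext i; fin_cases i <;> simp [swapIso]
  rw [← swapIso.preimage_symm, mem_preimage, this]

theorem mem_image_addRight {s : Set Plane} {x v : Plane} :
    x ∈ IsometryEquiv.addRight v '' s ↔ x - v ∈ s := by
  simp [sub_eq_add_neg]

def lowerTri : Set Plane := {x | 0 ≤ x 1 ∧ x 1 ≤ x 0 ∧ x 0 + x 1 ≤ 1}

def upperTri : Set Plane := {x | x 1 ≤ 1 ∧ x 0 ≤ x 1 ∧ 1 ≤ x 0 + x 1}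

theorem image_addRight_lowerTri :
    IsometryEquiv.addRight !₂[-1/2, 1/2] '' lowerTri =
      rotScale '' cell 0 ∩ {y | 1/2 ≤ y 1} := by
  ext x
  rw [mem_image_addRight, mem_inter_iff, mem_image_rotScale]
  simp only [lowerTri, cell, rect, mem_ofPred_eq, PiLp.sub_apply, Matrix.cons_val_zero,
    Matrix.cons_val_one, Prod.fst_zero, Prod.snd_zero, Int.cast_zero, zero_add]
  constructor <;> intro h <;> casesm* _ ∧ _ <;> (repeat' apply And.intro) <;> linarith

theorem image_addRight_upperTri :
    IsometryEquiv.addRight !₂[-1/2, -1/2] '' upperTri =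
      rotScale '' cell 0 ∩ {y | y 1 ≤ 1/2} := by
  ext x
  rw [mem_image_addRight, mem_inter_iff, mem_image_rotScale]
  simp only [upperTri, cell, rect, mem_ofPred_eq, PiLp.sub_apply, Matrix.cons_val_zero,
    Matrix.cons_val_one, Prod.fst_zero, Prod.snd_zero, Int.cast_zero, zero_add]
  constructor <;> intro h <;> casesm* _ ∧ _ <;> (repeat' apply And.intro) <;> linarith

theorem measurableSet_lowerTri : MeasurableSet lowerTri := by
  unfold lowerTri; measurability

theorem measurableSet_upperTri : MeasurableSet upperTri := by
  unfold upperTri; measurability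

theorem cell_zero_eq : cell 0 = (lowerTri ∪ upperTri) ∪ swapIso '' (lowerTri ∪ upperTri) := by
  ext x
  rw [mem_union, mem_image_swapIso]
  simp only [lowerTri, upperTri, cell, rect, mem_union, mem_ofPred_eq, Prod.fst_zero,
    Prod.snd_zero, Int.cast_zero, zero_add, Matrix.cons_val_zero, Matrix.cons_val_one]
  constructor
  · rintro ⟨h₀, h₁, h₂, h₃⟩
    rcases le_total (x 1) (x 0) with hd | hd <;> rcases le_total (x 0 + x 1) 1 with ha | ha
    · exact .inl (.inl ⟨h₂, hd, ha⟩)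
    · exact .inr (.inr ⟨h₁, hd, by linarith⟩)
    · exact .inr (.inl ⟨h₀, hd, by linarith⟩)
    · exact .inl (.inr ⟨h₃, hd, ha⟩)
  · rintro ((h | h) | h | h) <;> obtain ⟨_, _, _⟩ := h <;>
      refine ⟨?_, ?_, ?_, ?_⟩ <;> linarith

theorem volume_lowerTri_inter_upperTri : volume (lowerTri ∩ upperTri) = 0 :=
  measure_mono_null
    (fun x ⟨h₁, h₂⟩ => show 1 * x 0 + 1 * x 1 = 1 by linarith [h₁.2.2, h₂.2.2])
    (volume_setOf_line_eq_zero (.inl one_ne_zero) 1)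

theorem volume_inter_swapIso_image :
    volume ((lowerTri ∪ upperTri) ∩ swapIso '' (lowerTri ∪ upperTri)) = 0 := by
  refine measure_mono_null
    (t := {x | 1 * x 0 + (-1) * x 1 = 0} ∪ {x | 1 * x 0 + 1 * x 1 = 1}) ?_
    (measure_union_null (volume_setOf_line_eq_zero (.inl one_ne_zero) 0)
      (volume_setOf_line_eq_zero (.inl one_ne_zero) 1))
  rintro x ⟨hx, hx'⟩
  rw [mem_image_swapIso] at hx'
  simp only [lowerTri, upperTri, mem_union, mem_ofPred_eq, Matrix.cons_val_zero,
    Matrix.cons_val_one] at hx hx' ⊢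
  rcases hx with ⟨-, h₁, h₂⟩ | ⟨-, h₁, h₂⟩ <;>
    rcases hx' with ⟨-, h₁', h₂'⟩ | ⟨-, h₁', h₂'⟩ <;>
    first | (left; linarith) | (right; linarith)

theorem foldsToLevels_cell_zero :
    FoldsToLevels (cell 0) ((rotScale '' cell 0).indicator fun _ => 2) := by
  have hhalves : volume ((rotScale '' cell 0 ∩ {y | 1/2 ≤ y 1}) ∩
      (rotScale '' cell 0 ∩ {y | y 1 ≤ 1/2})) = 0 :=
    measure_mono_null (fun y ⟨⟨_, h₁⟩, ⟨_, h₂⟩⟩ => by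
      simp only [mem_ofPred_eq] at h₁ h₂ ⊢; linarith)
      (volume_setOf_line_eq_zero (α := 0) (.inr one_ne_zero) (1/2))
  have hhour := (FoldsToLevels.of_isometry _ measurableSet_lowerTri).union_indicator
    (FoldsToLevels.of_isometry _ measurableSet_upperTri) volume_lowerTri_inter_upperTri
    (by rwa [image_addRight_lowerTri, image_addRight_upperTri])
  have hcover : {y : Plane | 1/2 ≤ y 1} ∪ {y | y 1 ≤ 1/2} = univ :=
    eq_univ_of_forall fun y => le_total (1/2) (y 1)
  rw [image_addRight_lowerTri, image_addRight_upperTri, ← inter_union_distrib_left, hcover,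
    inter_univ] at hhour
  have hbow := hhour.image_indicator swapIso (IsometryEquiv.refl _)
  rw [show ⇑(IsometryEquiv.refl Plane) = id from rfl, image_id] at hbow
  have h := hhour.union hbow volume_inter_swapIso_image
  rw [← cell_zero_eq] at h
  refine h.congr_ae (.of_forall fun x => ?_)
  by_cases hx : x ∈ rotScale '' cell 0 <;> simp [hx]

def cornerVec (c : ℤ × ℤ) : Plane := !₂[(c.1 : ℝ), c.2]

theorem image_addRight_cell_zero (c : ℤ × ℤ) :
    IsometryEquiv.addRight (cornerVec c) '' cell 0 = cell c := by
  ext x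
  simp only [mem_image_addRight, cell, rect, cornerVec, mem_ofPred_eq, PiLp.sub_apply,
    Matrix.cons_val_zero, Matrix.cons_val_one, Prod.fst_zero, Prod.snd_zero,
    Int.cast_zero, zero_add, sub_nonneg]
  constructor <;> intro h <;> casesm* _ ∧ _ <;> (repeat' apply And.intro) <;> linarith

theorem foldsToLevels_cell (c : ℤ × ℤ) :
    FoldsToLevels (cell c) ((rotScale '' cell c).indicator fun _ => 2) := by
  have h := foldsToLevels_cell_zero.image_indicator (.addRight (cornerVec c))
    (.addRight (rotScale (cornerVec c)))
  have himage : IsometryEquiv.addRight (rotScale (cornerVec c)) '' (rotScale '' cell 0) =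
      rotScale '' cell c := by
    rw [← image_addRight_cell_zero c, image_image, image_image]
    simp only [IsometryEquiv.addRight_apply, rotScale_add]
  rwa [image_addRight_cell_zero, himage] at h

theorem eq_add_one_or_eq_add_one_of_mem_Icc {i j : ℤ} (hij : i ≠ j) {t : ℝ}
    (hi : t ∈ Icc (i : ℝ) (i + 1)) (hj : t ∈ Icc (j : ℝ) (j + 1)) :
    t = i + 1 ∨ t = j + 1 := by
  rcases hij.lt_or_gt with h | h
  · have : (i : ℝ) + 1 ≤ j := by exact_mod_cast h
    exact .inl (by linarith [hi.2, hj.1])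
  · have : (j : ℝ) + 1 ≤ i := by exact_mod_cast h
    exact .inr (by linarith [hj.2, hi.1])

theorem volume_cell_inter_cell {c c' : ℤ × ℤ} (h : c ≠ c') :
    volume (cell c ∩ cell c') = 0 := by
  have hline : ∀ (i : Fin 2) (t : ℝ), volume {x : Plane | x i = t} = 0 := by
    intro i t
    fin_cases i
    · simpa using volume_setOf_line_eq_zero (α := 1) (β := 0) (.inl one_ne_zero) t
    · simpa using volume_setOf_line_eq_zero (α := 0) (β := 1) (.inr one_ne_zero) t
  refine measure_mono_null (t := {x | x 0 = c.1 + 1} ∪ {x | x 0 = c'.1 + 1} ∪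
    ({x | x 1 = c.2 + 1} ∪ {x | x 1 = c'.2 + 1})) ?_ (measure_union_null
      (measure_union_null (hline _ _) (hline _ _)) (measure_union_null (hline _ _) (hline _ _)))
  rintro x ⟨⟨h₀, h₁, h₂, h₃⟩, ⟨h₀', h₁', h₂', h₃'⟩⟩
  by_cases hfst : c.1 = c'.1
  · have hsnd : c.2 ≠ c'.2 := fun hsnd => h (Prod.ext hfst hsnd)
    exact .inr (eq_add_one_or_eq_add_one_of_mem_Icc hsnd ⟨h₂, h₃⟩ ⟨h₂', h₃'⟩)
  · exact .inl (eq_add_one_or_eq_add_one_of_mem_Icc hfst ⟨h₀, h₁⟩ ⟨h₀', h₁'⟩)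

theorem foldsToTwoLevels_biUnion_cell (S : Finset (ℤ × ℤ)) :
    FoldsToTwoLevels (⋃ c ∈ S, cell c) (rotScale '' ⋃ c ∈ S, cell c) := by
  rw [foldsToTwoLevels_iff, image_iUnion₂]
  refine FoldsToLevels.biUnion_indicator (fun c _ => foldsToLevels_cell c)
    (fun c _ c' _ h => volume_cell_inter_cell h) (fun c _ c' _ h => ?_)
  dsimp only
  rw [← image_inter (isSimilarity_rotScale.injective (by positivity))]
  exact isSimilarity_rotScale.lipschitzWith.volume_image_eq_zero (volume_cell_inter_cell h)

theorem Int.exists_mem_Ico_mem_Icc {m n : ℤ} (hmn : m < n) {t : ℝ}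
    (ht : t ∈ Icc (m : ℝ) n) : ∃ i ∈ Finset.Ico m n, t ∈ Icc (i : ℝ) (i + 1) := by
  refine ⟨min ⌊t⌋ (n - 1), ?_, ?_, ?_⟩
  · have : m ≤ ⌊t⌋ := Int.le_floor.2 ht.1
    simp only [Finset.mem_Ico]; omega
  · push_cast
    exact (min_le_left _ _).trans (Int.floor_le t)
  · rcases le_total ⌊t⌋ (n - 1) with h | h
    · rw [min_eq_left h]; exact (Int.lt_floor_add_one t).le
    · rw [min_eq_right h]; push_cast; linarith [ht.2]

theorem rect_eq_biUnion_cell {m n p q : ℤ} (hmn : m < n) (hpq : p < q) :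
    rect m n p q = ⋃ c ∈ Finset.Ico m n ×ˢ Finset.Ico p q, cell c := by
  ext x
  simp only [mem_iUnion, Finset.mem_product, exists_prop, Prod.exists]
  constructor
  · rintro ⟨h₀, h₁, h₂, h₃⟩
    obtain ⟨i, hi, hxi⟩ := Int.exists_mem_Ico_mem_Icc hmn ⟨h₀, h₁⟩
    obtain ⟨j, hj, hxj⟩ := Int.exists_mem_Ico_mem_Icc hpq ⟨h₂, h₃⟩
    exact ⟨i, j, ⟨hi, hj⟩, hxi.1, hxi.2, hxj.1, hxj.2⟩
  · rintro ⟨i, j, ⟨hi, hj⟩, h₀, h₁, h₂, h₃⟩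
    rw [Finset.mem_Ico] at hi hj
    have hi₁ : (m : ℝ) ≤ i := by exact_mod_cast hi.1
    have hi₂ : (i : ℝ) + 1 ≤ n := by exact_mod_cast hi.2
    have hj₁ : (p : ℝ) ≤ j := by exact_mod_cast hj.1
    have hj₂ : (j : ℝ) + 1 ≤ q := by exact_mod_cast hj.2
    exact ⟨by linarith, by linarith, by linarith, by linarith⟩

theorem L_shape_folds_to_two_levels_general (a b : ℕ) :
    ∃ σ : Plane → Plane, IsSimilarity σ (1 / Real.sqrt 2) ∧
      FoldsToTwoLevels (rect 0 ((a : ℝ) + 1) 0 1 ∪ rect 0 1 0 ((b : ℝ) + 1))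
        (σ '' (rect 0 ((a : ℝ) + 1) 0 1 ∪ rect 0 1 0 ((b : ℝ) + 1))) := by
  have hL : rect 0 ((a : ℝ) + 1) 0 1 ∪ rect 0 1 0 ((b : ℝ) + 1) =
      ⋃ c ∈ Finset.Ico 0 ((a : ℤ) + 1) ×ˢ Finset.Ico 0 1 ∪
        Finset.Ico 0 1 ×ˢ Finset.Ico 0 ((b : ℤ) + 1), cell c := by
    rw [Finset.set_biUnion_union, ← rect_eq_biUnion_cell (by omega) (by omega),
      ← rect_eq_biUnion_cell (by omega) (by omega)]
    push_cast
    rfl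
  rw [hL]
  exact ⟨rotScale, isSimilarity_rotScale, foldsToTwoLevels_biUnion_cell _⟩

/-- An L-shaped polyomino (one HV-square, a horizontal appendage of length `a` and a
vertical appendage of length `b`) folds to two levels onto a `1/√2`-scaled copy of itself. -/
theorem L_shape_folds_to_two_levels (a b : ℕ) (ha : 1 ≤ a) (hb : 1 ≤ b) :
    ∃ σ : Plane → Plane, IsSimilarity σ (1 / Real.sqrt 2) ∧
      FoldsToTwoLevels (rect 0 ((a : ℝ) + 1) 0 1 ∪ rect 0 1 0 ((b : ℝ) + 1))
        (σ '' (rect 0 ((a : ℝ) + 1) 0 1 ∪ rect 0 1 0 ((b : ℝ) + 1))) :=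
  L_shape_folds_to_two_levels_general a b
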